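/- Let A_e(x,t) = Σ_{k even} F_k(x) t^k and A_o(x,t) = Σ_{k odd} F_k(x) t^k, where F_k(x) = Σ_n a_k(n) x^n/n!. Then A_e(x,t)^2 − A_o(x,t)^2 = 1 as formal power series. -/

import Mathlib

/-- The list of values of a permutation of `Fin n` (0-indexed; relative order
is what matters). -/
def permList (n : ℕ) (w : Equiv.Perm (Fin n)) : List ℕ :=
  List.ofFn (fun i => (w i : ℕ))

/-- A list is alternating: `a > b < c > d < ⋯` (descents in even positions). -/
def IsAlt (l : List ℕ) : Prop :=
  ∀ i : ℕ, ∀ hi : i + 1 < l.length,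
    if i % 2 = 0 then l.get ⟨i + 1, hi⟩ < l.get ⟨i, Nat.lt_of_succ_lt hi⟩
    else l.get ⟨i, Nat.lt_of_succ_lt hi⟩ < l.get ⟨i + 1, hi⟩

/-- `asLen n w` : the maximum length of an alternating subsequence of `w`. -/
noncomputable def asLen (n : ℕ) (w : Equiv.Perm (Fin n)) : ℕ :=
  sSup {k | ∃ l : List ℕ, l.Sublist (permList n w) ∧ IsAlt l ∧ l.length = k}

/-- `aCount n k = #{w ∈ S_n : as(w) = k}`. -/
noncomputable def aCount (n k : ℕ) : ℕ :=
  Nat.card {w : Equiv.Perm (Fin n) // asLen n w = k}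

/-- `bCount n k = #{w ∈ S_n : as(w) ≤ k}`. -/
noncomputable def bCount (n k : ℕ) : ℕ :=
  Nat.card {w : Equiv.Perm (Fin n) // asLen n w ≤ k}

/-- The even part `A_e(x,t)` as a formal power series in `x` (variable 0)
and `t` (variable 1); coefficient of `x^n t^k` is `a_k(n)/n!` for `k` even. -/
noncomputable def Ae : MvPowerSeries (Fin 2) ℚ :=
  fun d => if d 1 % 2 = 0 then (aCount (d 0) (d 1) : ℚ) / (d 0).factorial else 0

/-- The odd part `A_o(x,t)`. -/
noncomputable def Ao : MvPowerSeries (Fin 2) ℚ :=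
  fun d => if d 1 % 2 = 1 then (aCount (d 0) (d 1) : ℚ) / (d 0).factorial else 0

/-!
Write `P_n(t) = ∑_{w ∈ S_n} t ^ as(w)` and `A(x, t) = ∑ₙ P_n(t) xⁿ / n!`; then `A_e + A_o = A(x, t)`
and `A_e - A_o = A(x, -t)`, so it suffices to show `A(x, t) A(x, -t) = 1`.

The maximal length of an alternating subsequence is computed greedily. Splitting a permutation
of `{0, …, n}` at its maximum, `w = u n v`, gives `as(w) = as(u n) + as'(v)`, where `as'` asks for
an initial ascent; complementing the values shows that `as'` is distributed like `as`, and
`as(u n)` is odd. Summing over the choice of the values in `u`, this says `∂ₓA = Λ A` with `Λ`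
odd in `t`. Hence `∂ₓ (A(x, t) A(x, -t)) = (Λ(x, t) + Λ(x, -t)) A(x, t) A(x, -t) = 0`, and the
product is `1` at `x = 0`.
-/

namespace Alternating

variable {α β : Type*} [LinearOrder α] [LinearOrder β]

def IsStep (down : Bool) (a b : α) : Prop := if down then b < a else a < b

instance (down : Bool) (a b : α) : Decidable (IsStep down a b) := by
  unfold IsStep; infer_instance

def Zigzag : Bool → List α → Prop
  | _, [] => True
  | _, [_] => True
  | down, a :: b :: l => IsStep down a b ∧ Zigzag (!down) (b :: l)

/-- Greedy: if `a` does not step to `b` in the required direction, then `b` is at least as good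
a start as `a`, so `a` is dropped. -/
def altLen : Bool → List α → ℕ
  | _, [] => 0
  | _, [_] => 1
  | down, a :: b :: l =>
    if IsStep down a b then altLen (!down) (b :: l) + 1 else altLen down (b :: l)

section IsStep

variable {down : Bool} {a b c : α}

@[simp] theorem isStep_true : IsStep true a b ↔ b < a := Iff.rfl

@[simp] theorem isStep_false : IsStep false a b ↔ a < b := Iff.rfl

theorem IsStep.ne (h : IsStep down a b) : a ≠ b := by
  cases down <;> simp only [isStep_true, isStep_false] at * <;> order

theorem IsStep.not_isStep_not (h : IsStep down a b) : ¬IsStep (!down) a b := by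
  cases down <;>
    simp only [isStep_true, isStep_false, Bool.not_true, Bool.not_false] at * <;> order

theorem IsStep.trans_not (h₁ : IsStep down a b) (h₂ : ¬IsStep (!down) b c) :
    IsStep down a c := by
  cases down <;>
    simp only [isStep_true, isStep_false, Bool.not_true, Bool.not_false] at * <;> order

theorem not_isStep_trans (h₁ : ¬IsStep down a b) (h₂ : ¬IsStep down b c) :
    ¬IsStep down a c := by
  cases down <;> simp only [isStep_true, isStep_false] at * <;> order

theorem IsStep.of_not_isStep (h₁ : ¬IsStep down a b) (h₂ : IsStep down a c) :
    IsStep down b c := by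
  cases down <;> simp only [isStep_true, isStep_false] at * <;> order

end IsStep

theorem altLen_cons_cons (down : Bool) (a b : α) (l : List α) :
    altLen down (a :: b :: l) =
      if IsStep down a b then altLen (!down) (b :: l) + 1 else altLen down (b :: l) := rfl

theorem altLen_le_altLen_not_add_one (down : Bool) (l : List α) :
    altLen down l ≤ altLen (!down) l + 1 := by
  induction l generalizing down with
  | nil => simp [altLen]
  | cons a l ih =>
    rcases l with _ | ⟨b, l⟩
    · simp [altLen]
    rw [altLen_cons_cons, altLen_cons_cons, Bool.not_not]
    by_cases h : IsStep down a b
    · rw [if_pos h, if_neg h.not_isStep_not]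
    · rw [if_neg h]
      split_ifs
      · omega
      · exact ih down

theorem altLen_le_altLen_cons (down : Bool) (a : α) (l : List α) :
    altLen down l ≤ altLen down (a :: l) := by
  rcases l with _ | ⟨b, l⟩
  · simp [altLen]
  · rw [altLen_cons_cons]
    split_ifs
    · exact altLen_le_altLen_not_add_one down _
    · rfl

theorem length_le_altLen {down : Bool} {l w : List α} (hl : Zigzag down l) (hlw : l.Sublist w) :
    l.length ≤ altLen down w := by
  induction w generalizing l down with
  | nil => simp [List.sublist_nil.1 hlw, altLen]
  | cons a w ih =>
    rcases List.sublist_cons_iff.1 hlw with hsub | ⟨l, rfl, hsub⟩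
    · exact (ih hl hsub).trans (altLen_le_altLen_cons down a w)
    rcases w with _ | ⟨b, w⟩
    · simp [List.sublist_nil.1 hsub, altLen]
    rcases l with _ | ⟨y, l⟩
    · simpa using (ih (l := [b]) trivial (by simp)).trans (altLen_le_altLen_cons down a _)
    obtain ⟨hay, hl⟩ := hl
    rw [altLen_cons_cons]
    split_ifs with hab
    · simpa using ih hl hsub
    · have hby := hay.of_not_isStep hab
      have hyw : (y :: l).Sublist w := by
        rcases List.sublist_cons_iff.1 hsub with h | ⟨_, h, _⟩
        · exact h
        · exact absurd (List.cons_eq_cons.1 h).1 (hby.ne).symm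
      exact ih (l := b :: y :: l) ⟨hby, hl⟩ (hyw.cons_cons b)

theorem not_isStep_self (down : Bool) (a : α) : ¬IsStep down a a := fun h => h.ne rfl

/-- The last conjunct (the witness starts no worse than `w`) is what allows prepending. -/
theorem exists_zigzag_sublist (down : Bool) (w : List α) :
    ∃ l, l.Sublist w ∧ Zigzag down l ∧ l.length = altLen down w ∧
      ∀ x ∈ l.head?, ∀ a ∈ w.head?, ¬IsStep down a x := by
  induction w generalizing down with
  | nil => exact ⟨[], by simp, trivial, rfl, by simp⟩
  | cons a w ih =>
    rcases w with _ | ⟨b, w⟩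
    · exact ⟨[a], by simp, trivial, rfl, by simp [not_isStep_self]⟩
    rw [altLen_cons_cons]
    split_ifs with hab
    · obtain ⟨l, hsub, hl, hlen, hhead⟩ := ih (!down)
      refine ⟨a :: l, hsub.cons_cons a, ?_, by simp [hlen], by simp [not_isStep_self]⟩
      rcases l with _ | ⟨x, l⟩
      · trivial
      · exact ⟨hab.trans_not (hhead x rfl b rfl), hl⟩
    · obtain ⟨l, hsub, hl, hlen, hhead⟩ := ih down
      refine ⟨l, hsub.cons a, hl, hlen, fun x hx _ ha => ?_⟩
      cases ha
      exact not_isStep_trans hab (hhead x hx b rfl)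

theorem isGreatest_altLen (down : Bool) (w : List α) :
    IsGreatest {k | ∃ l, l.Sublist w ∧ Zigzag down l ∧ l.length = k} (altLen down w) :=
  ⟨let ⟨l, hsub, hl, hlen, _⟩ := exists_zigzag_sublist down w; ⟨l, hsub, hl, hlen⟩,
    fun _ ⟨_, hsub, hl, hlen⟩ => hlen ▸ length_le_altLen hl hsub⟩

theorem zigzag_iff_forall (down : Bool) (l : List α) :
    Zigzag down l ↔
      ∀ i (hi : i + 1 < l.length), IsStep (decide (i % 2 = 0) == down) l[i] l[i + 1] := by
  induction l generalizing down with
  | nil => simp [Zigzag]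
  | cons a l ih =>
    rcases l with _ | ⟨b, l⟩
    · simp [Zigzag]
    have hpar (j : ℕ) : (decide ((j + 1) % 2 = 0) == down) = (decide (j % 2 = 0) == !down) := by
      rcases Nat.mod_two_eq_zero_or_one j with h | h <;> cases down <;>
        simp [h, Nat.succ_mod_two_eq_zero_iff]
    simp only [Zigzag, ih]
    constructor
    · rintro ⟨hab, hl⟩ (_ | j) hj
      · simpa using hab
      · rw [hpar]
        exact hl j (Nat.lt_of_succ_lt_succ hj)
    · intro h
      refine ⟨by simpa using h 0 (by simp), fun j hj => ?_⟩
      rw [← hpar]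
      exact h (j + 1) (Nat.succ_lt_succ hj)

theorem isAlt_iff_zigzag (l : List ℕ) : IsAlt l ↔ Zigzag true l := by
  simp [IsAlt, zigzag_iff_forall, IsStep]

theorem asLen_eq_altLen (n : ℕ) (w : Equiv.Perm (Fin n)) :
    asLen n w = altLen true (permList n w) := by
  simp only [asLen, isAlt_iff_zigzag]
  exact (isGreatest_altLen true _).csSup_eq

theorem isStep_map_iff_of_strictMonoOn {g : α → β} {s : Set α} (hg : StrictMonoOn g s)
    {a b : α} (ha : a ∈ s) (hb : b ∈ s) (down : Bool) :
    IsStep down (g a) (g b) ↔ IsStep down a b := by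
  cases down
  · exact hg.lt_iff_lt ha hb
  · exact hg.lt_iff_lt hb ha

theorem isStep_map_iff_of_strictAntiOn {g : α → β} {s : Set α} (hg : StrictAntiOn g s)
    {a b : α} (ha : a ∈ s) (hb : b ∈ s) (down : Bool) :
    IsStep down (g a) (g b) ↔ IsStep (!down) a b := by
  cases down
  · exact hg.lt_iff_gt ha hb
  · exact hg.lt_iff_gt hb ha

theorem altLen_map_of_strictMonoOn {g : α → β} {l : List α} (hg : StrictMonoOn g {x | x ∈ l})
    (down : Bool) : altLen down (l.map g) = altLen down l := by
  induction l generalizing down with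
  | nil => rfl
  | cons a l ih =>
    rcases l with _ | ⟨b, l⟩
    · rfl
    have ih := ih (hg.mono fun x hx => List.mem_cons_of_mem a hx)
    rw [List.map_cons, List.map_cons, altLen_cons_cons, ← List.map_cons, ih, ih,
      altLen_cons_cons]
    simp only [isStep_map_iff_of_strictMonoOn hg (a := a) (b := b) (by simp) (by simp)]

theorem altLen_map_of_strictAntiOn {g : α → β} {l : List α} (hg : StrictAntiOn g {x | x ∈ l})
    (down : Bool) : altLen down (l.map g) = altLen (!down) l := by
  induction l generalizing down with
  | nil => rfl
  | cons a l ih =>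
    rcases l with _ | ⟨b, l⟩
    · rfl
    have ih := ih (hg.mono fun x hx => List.mem_cons_of_mem a hx)
    rw [List.map_cons, List.map_cons, altLen_cons_cons, ← List.map_cons, ih, ih, Bool.not_not,
      altLen_cons_cons]
    simp only [isStep_map_iff_of_strictAntiOn hg (a := a) (b := b) (by simp) (by simp),
      Bool.not_not]

section Maximum

variable {n : α} {v : List α}

theorem altLen_cons_of_forall_lt (hv : ∀ x ∈ v, x < n) :
    altLen true (n :: v) = altLen false v + 1 := by
  rcases v with _ | ⟨b, v⟩
  · rfl
  · simp [altLen_cons_cons, hv b (by simp)]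

theorem altLen_cons_append_cons_of_forall_lt (down : Bool) (a : α) (u : List α)
    (hu : ∀ x ∈ a :: u, x < n) (hv : ∀ x ∈ v, x < n) :
    altLen down (a :: u ++ n :: v) = altLen down (a :: u ++ [n]) + altLen false v := by
  induction u generalizing down a with
  | nil =>
    have ha := hu a (by simp)
    cases down <;>
      simp only [List.cons_append, List.nil_append, altLen_cons_cons, isStep_false, isStep_true, ha,
        not_lt_of_gt ha, ↓reduceIte, Bool.not_false, altLen_cons_of_forall_lt hv, altLen] <;>
      omega
  | cons b u ih =>
    simp only [List.cons_append, altLen_cons_cons] at ih ⊢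
    split_ifs
    · rw [ih _ b (fun x hx => hu x (List.mem_cons_of_mem a hx))]
      omega
    · exact ih _ b (fun x hx => hu x (List.mem_cons_of_mem a hx))

theorem altLen_append_cons_of_forall_lt {u : List α} (hu : ∀ x ∈ u, x < n)
    (hv : ∀ x ∈ v, x < n) :
    altLen true (u ++ n :: v) = altLen true (u ++ [n]) + altLen false v := by
  rcases u with _ | ⟨a, u⟩
  · rw [List.nil_append, altLen_cons_of_forall_lt hv, add_comm]
    rfl
  · exact altLen_cons_append_cons_of_forall_lt true a u hu hv

theorem odd_altLen_cons_append_singleton_iff (down : Bool) (a : α) (u : List α)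
    (hu : ∀ x ∈ a :: u, x < n) :
    Odd (altLen down (a :: u ++ [n])) ↔ down = true := by
  induction u generalizing down a with
  | nil =>
    have ha := hu a (by simp)
    cases down <;> simp [altLen_cons_cons, ha, not_lt_of_gt ha, altLen]
  | cons b u ih =>
    have ih := fun down => ih down b (fun x hx => hu x (List.mem_cons_of_mem a hx))
    simp only [List.cons_append, altLen_cons_cons] at ih ⊢
    split_ifs
    · rw [Nat.odd_add_one, ih]
      cases down <;> simp
    · exact ih down

theorem odd_altLen_append_singleton {u : List α} (hu : ∀ x ∈ u, x < n) :
    Odd (altLen true (u ++ [n])) := by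
  rcases u with _ | ⟨a, u⟩
  · exact odd_one
  · exact (odd_altLen_cons_append_singleton_iff true a u hu).2 rfl

end Maximum

end Alternating

open Finset

theorem Set.InjOn.list_map {α β : Type*} {g : α → β} {s : Set α} (hg : Set.InjOn g s)
    {l l' : List α} (hl : ∀ x ∈ l, x ∈ s) (hl' : ∀ x ∈ l', x ∈ s) (h : l.map g = l'.map g) :
    l = l' := by
  induction l generalizing l' with
  | nil => exact (List.map_eq_nil_iff.1 h.symm).symm
  | cons a l ih =>
    rcases l' with _ | ⟨a', l'⟩
    · exact absurd h (List.cons_ne_nil _ _)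
    simp only [List.map_cons, List.cons.injEq] at h
    simp only [List.mem_cons, forall_eq_or_imp] at hl hl'
    rw [hg hl.1 hl'.1 h.1, ih hl.2 hl'.2 h.2]

section Words

variable {α β : Type*} [DecidableEq α]

/-- For `S = range n`, the permutations of `S` in one-line notation. -/
noncomputable def words (S : Finset α) : Finset (List α) :=
  S.toList.permutations.toFinset

theorem mem_words {S : Finset α} {l : List α} : l ∈ words S ↔ l.Nodup ∧ l.toFinset = S := by
  rw [words, List.mem_toFinset, List.mem_permutations]
  refine ⟨fun h => ⟨h.nodup_iff.2 S.nodup_toList, ?_⟩, fun ⟨hl, hS⟩ => ?_⟩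
  · rw [List.toFinset_eq_of_perm _ _ h, Finset.toList_toFinset]
  · exact List.perm_of_nodup_nodup_toFinset_eq hl S.nodup_toList
      (by rw [hS, Finset.toList_toFinset])

theorem mem_of_mem_words {S : Finset α} {l : List α} (hl : l ∈ words S) {x : α} (hx : x ∈ l) :
    x ∈ S := by
  rw [← (mem_words.1 hl).2]
  exact List.mem_toFinset.2 hx

theorem card_words (S : Finset α) : #(words S) = (#S).factorial := by
  rw [words, List.toFinset_card_of_nodup (List.nodup_permutations _ S.nodup_toList),
    List.length_permutations, Finset.length_toList]

theorem injOn_map_words {g : α → β} {S : Finset α} (hg : Set.InjOn g S) :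
    Set.InjOn (List.map g) (words S) := fun _ hl _ hl' =>
  hg.list_map (fun _ hx => mem_of_mem_words hl hx) (fun _ hx => mem_of_mem_words hl' hx)

theorem words_image [DecidableEq β] {g : α → β} {S : Finset α} (hg : Set.InjOn g S) :
    words (S.image g) = (words S).image (List.map g) := by
  refine (Finset.eq_of_subset_of_card_le (fun l hl => ?_) ?_).symm
  · obtain ⟨l, hl', rfl⟩ := Finset.mem_image.1 hl
    obtain ⟨hnd, hS⟩ := mem_words.1 hl'
    refine mem_words.2 ⟨hnd.map_on fun x hx y hy => hg ?_ ?_, by rw [← hS]; ext; simp⟩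
    · exact mem_of_mem_words hl' hx
    · exact mem_of_mem_words hl' hy
  · rw [card_image_of_injOn (injOn_map_words hg), card_words, card_words,
      card_image_of_injOn hg]

theorem sum_words_image [DecidableEq β] {M : Type*} [AddCommMonoid M] {g : α → β} {S : Finset α}
    (hg : Set.InjOn g S) (f : List β → M) :
    ∑ l ∈ words (S.image g), f l = ∑ l ∈ words S, f (l.map g) := by
  rw [words_image hg, sum_image (injOn_map_words hg)]

end Words

theorem permList_mem_words (n : ℕ) (w : Equiv.Perm (Fin n)) :
    permList n w ∈ words (range n) := by
  refine mem_words.2 ⟨List.nodup_ofFn.2 (Fin.val_injective.comp w.injective), ?_⟩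
  ext x
  simp only [permList, List.mem_toFinset, List.mem_ofFn, mem_range]
  exact ⟨fun ⟨i, hi⟩ => hi ▸ (w i).isLt, fun hx => ⟨w.symm ⟨x, hx⟩, by simp⟩⟩

theorem sum_perm_eq_sum_words {M : Type*} [AddCommMonoid M] (n : ℕ) (f : List ℕ → M) :
    ∑ w : Equiv.Perm (Fin n), f (permList n w) = ∑ l ∈ words (range n), f l := by
  have hinj : Function.Injective (permList n) := fun w w' h =>
    Equiv.ext fun i => Fin.ext (congrFun (List.ofFn_injective h) i)
  have himage : univ.image (permList n) = words (range n) := by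
    refine Finset.eq_of_subset_of_card_le (fun l hl => ?_) ?_
    · obtain ⟨w, -, rfl⟩ := Finset.mem_image.1 hl
      exact permList_mem_words n w
    · rw [card_words, card_range, card_image_of_injective _ hinj, card_univ, Fintype.card_perm,
        Fintype.card_fin]
  rw [← himage, sum_image fun w _ w' _ h => hinj h]

theorem exists_strictMonoOn_image_range (S : Finset ℕ) :
    ∃ g : ℕ → ℕ, StrictMonoOn g (range #S) ∧ (range #S).image g = S := by
  refine ⟨fun k => if h : k < #S then S.orderEmbOfFin rfl ⟨k, h⟩ else 0, ?_, ?_⟩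
  · intro x hx y hy hxy
    simp only [coe_range, Set.mem_Iio] at hx hy
    simpa [hx, hy] using hxy
  · ext y
    simp only [mem_image, mem_range]
    constructor
    · rintro ⟨k, hk, rfl⟩
      simp [hk]
    · intro hy
      obtain ⟨⟨k, hk⟩, rfl⟩ : y ∈ Set.range (S.orderEmbOfFin rfl) := by simpa using hy
      exact ⟨k, hk, by simp [hk]⟩

theorem append_cons_mem_words_range_succ_iff {n : ℕ} {u v : List ℕ} :
    u ++ n :: v ∈ words (range (n + 1)) ↔
      u.toFinset ⊆ range n ∧ u.Nodup ∧ v ∈ words (range n \ u.toFinset) := by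
  simp only [mem_words, List.nodup_append, List.nodup_cons, Finset.ext_iff, Finset.subset_iff,
    List.mem_toFinset, List.toFinset_append, List.toFinset_cons, mem_union, mem_insert, mem_range,
    mem_sdiff, List.mem_cons]
  grind

theorem sum_words_range_succ {M : Type*} [AddCommMonoid M] (n : ℕ) (f : List ℕ → M) :
    ∑ w ∈ words (range (n + 1)), f w =
      ∑ A ∈ (range n).powerset, ∑ u ∈ words A, ∑ v ∈ words (range n \ A), f (u ++ n :: v) := by
  simp_rw [← sum_product']
  rw [sum_sigma']
  symm
  refine sum_bij (fun x _ => x.2.1 ++ n :: x.2.2) ?_ ?_ ?_ fun _ _ => rfl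
  · rintro ⟨A, u, v⟩ h
    simp only [mem_sigma, mem_powerset, mem_product] at h
    obtain ⟨hA, hu, hv⟩ := h
    obtain ⟨hnd, rfl⟩ := mem_words.1 hu
    exact append_cons_mem_words_range_succ_iff.2 ⟨hA, hnd, hv⟩
  · rintro ⟨A, u, v⟩ h ⟨A', u', v'⟩ h' huv
    simp only [mem_sigma, mem_powerset, mem_product, mem_words] at h h'
    obtain ⟨hA, ⟨-, rfl⟩, -, hvA⟩ := h
    obtain ⟨-, ⟨-, rfl⟩, -, -⟩ := h'
    have hnu : n ∉ u := fun h => by simpa using hA (List.mem_toFinset.2 h)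
    have hnv : n ∉ v := fun h => by simpa using (hvA ▸ List.mem_toFinset.2 h : n ∈ range n \ _)
    obtain ⟨rfl, -, rfl⟩ := (List.append_cons_inj_of_notMem hnu hnv).1 huv
    rfl
  · intro w hw
    obtain ⟨u, v, rfl⟩ := List.append_of_mem (a := n) (l := w)
      (by simp [← List.mem_toFinset, (mem_words.1 hw).2])
    obtain ⟨hA, hnd, hv⟩ := append_cons_mem_words_range_succ_iff.1 hw
    exact ⟨⟨u.toFinset, u, v⟩, by simp [hA, mem_words.2 ⟨hnd, rfl⟩, hv], rfl⟩

section Polynomials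

open Alternating

variable {R : Type*} [CommSemiring R]

/-- `P_n(t) = ∑_{w ∈ S_n} t ^ as(w)`. -/
noncomputable def altPoly (t : R) (n : ℕ) : R :=
  ∑ w ∈ words (range n), t ^ altLen true w

noncomputable def altPolyMaxLast (t : R) (n : ℕ) : R :=
  ∑ u ∈ words (range n), t ^ altLen true (u ++ [n])

theorem altPoly_zero (t : R) : altPoly t 0 = 1 := by
  simp [altPoly, words, altLen]

theorem sum_words_pow_altLen_eq_range_card (t : R) (down : Bool) (S : Finset ℕ) :
    ∑ w ∈ words S, t ^ altLen down w = ∑ w ∈ words (range #S), t ^ altLen down w := by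
  obtain ⟨g, hg, hS⟩ := exists_strictMonoOn_image_range S
  conv_lhs => rw [← hS, sum_words_image hg.injOn]
  refine sum_congr rfl fun w hw => ?_
  rw [altLen_map_of_strictMonoOn (hg.mono fun x hx => mem_of_mem_words hw hx)]

theorem sum_words_pow_altLen_false_eq_altPoly (t : R) (S : Finset ℕ) :
    ∑ w ∈ words S, t ^ altLen false w = altPoly t #S := by
  rw [sum_words_pow_altLen_eq_range_card]
  set m := #S
  have hg : StrictAntiOn (fun x => m - 1 - x) (range m) := by
    intro x hx y hy hxy
    simp only [coe_range, Set.mem_Iio] at hx hy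
    dsimp only
    omega
  have himage : (range m).image (fun x => m - 1 - x) = range m := by
    ext y
    simp only [mem_image, mem_range]
    exact ⟨fun ⟨x, hx, hxy⟩ => by omega, fun hy => ⟨m - 1 - y, by omega, by omega⟩⟩
  conv_lhs => rw [← himage, sum_words_image hg.injOn]
  refine sum_congr rfl fun w hw => ?_
  rw [altLen_map_of_strictAntiOn (hg.mono fun x hx => mem_of_mem_words hw hx), Bool.not_false]

theorem sum_words_pow_altLen_append_eq_altPolyMaxLast (t : R) {n : ℕ} {A : Finset ℕ}
    (hA : A ⊆ range n) :
    ∑ u ∈ words A, t ^ altLen true (u ++ [n]) = altPolyMaxLast t #A := by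
  obtain ⟨g, hg, hS⟩ := exists_strictMonoOn_image_range A
  set m := #A
  set g' := Function.update g m n
  have hgg' : ∀ x ∈ range m, g' x = g x := fun x hx =>
    Function.update_of_ne (mem_range.1 hx).ne _ _
  have hgA : ∀ x ∈ range m, g x < n := fun x hx =>
    mem_range.1 (hA (hS ▸ mem_image_of_mem g hx))
  have hg' : StrictMonoOn g' (range (m + 1)) := by
    intro x hx y hy hxy
    simp only [coe_range, Set.mem_Iio] at hx hy
    have hxm : x ∈ range m := mem_range.2 (by omega)
    rw [hgg' x hxm]
    rcases (Nat.lt_succ_iff_lt_or_eq.1 hy) with hym | rfl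
    · rw [hgg' y (mem_range.2 hym)]
      exact hg hxm (mem_range.2 hym) hxy
    · simpa [g'] using hgA x hxm
  have himage : (range m).image g' = A := by rw [image_congr hgg', hS]
  conv_lhs => rw [← himage, sum_words_image (hg'.injOn.mono (by simp))]
  refine sum_congr rfl fun u hu => ?_
  have : u.map g' ++ [n] = (u ++ [m]).map g' := by simp [g']
  rw [this, altLen_map_of_strictMonoOn (hg'.mono fun x hx => ?_)]
  rcases List.mem_append.1 hx with hx | hx
  · exact mem_range.2 (Nat.lt_succ_of_lt (mem_range.1 (mem_of_mem_words hu hx)))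
  · rw [List.mem_singleton.1 hx]
    exact self_mem_range_succ m

theorem altPoly_succ (t : R) (n : ℕ) :
    altPoly t (n + 1) =
      ∑ m ∈ range (n + 1), n.choose m • (altPolyMaxLast t m * altPoly t (n - m)) := by
  have hA : ∀ A ∈ (range n).powerset,
      ∑ u ∈ words A, ∑ v ∈ words (range n \ A), t ^ altLen true (u ++ n :: v) =
        altPolyMaxLast t #A * altPoly t (n - #A) := by
    intro A hA
    rw [mem_powerset] at hA
    have hcard : n - #A = #(range n \ A) := by rw [card_sdiff_of_subset hA, card_range]
    rw [← sum_words_pow_altLen_append_eq_altPolyMaxLast t hA, hcard,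
      ← sum_words_pow_altLen_false_eq_altPoly, sum_mul_sum]
    refine sum_congr rfl fun u hu => sum_congr rfl fun v hv => ?_
    rw [← pow_add, altLen_append_cons_of_forall_lt]
    · exact fun x hx => mem_range.1 (hA (mem_of_mem_words hu hx))
    · exact fun x hx => mem_range.1 (mem_sdiff.1 (mem_of_mem_words hv hx)).1
  rw [altPoly, sum_words_range_succ, sum_congr rfl hA,
    sum_powerset_apply_card (fun m => altPolyMaxLast t m * altPoly t (n - m)), card_range]

end Polynomials

theorem altPolyMaxLast_neg {R : Type*} [CommRing R] (t : R) (n : ℕ) :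
    altPolyMaxLast (-t) n = -altPolyMaxLast t n := by
  rw [altPolyMaxLast, altPolyMaxLast, ← sum_neg_distrib]
  refine sum_congr rfl fun u hu => ?_
  exact (Alternating.odd_altLen_append_singleton
    fun x hx => mem_range.1 (mem_of_mem_words hu hx)).neg_pow t

section ExponentialGeneratingFunctions

open PowerSeries

variable {R : Type*} [CommRing R] [Algebra ℚ R]

noncomputable def egf (a : ℕ → R) : R⟦X⟧ :=
  mk fun n => (n.factorial : ℚ)⁻¹ • a n

theorem egf_neg (a : ℕ → R) : (egf fun n => -a n) = -egf a := by
  ext n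
  simp [egf]

theorem constantCoeff_egf (a : ℕ → R) : constantCoeff (egf a) = a 0 := by
  simp [egf, ← coeff_zero_eq_constantCoeff_apply]

theorem derivative_egf (a : ℕ → R) : d⁄dX R (egf a) = egf fun n => a (n + 1) := by
  ext n
  rw [coeff_derivative, egf, egf, coeff_mk, coeff_mk, mul_comm, ← Nat.cast_succ, ← nsmul_eq_mul,
    ← Nat.cast_smul_eq_nsmul ℚ, smul_smul, Nat.factorial_succ]
  congr 1
  have := n.factorial_pos
  field_simp
  push_cast
  ring

theorem egf_mul (a b : ℕ → R) :
    egf a * egf b = egf fun n => ∑ m ∈ range (n + 1), n.choose m • (a m * b (n - m)) := by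
  ext n
  rw [coeff_mul, Finset.Nat.sum_antidiagonal_eq_sum_range_succ_mk, egf, egf, egf, coeff_mk,
    smul_sum]
  refine sum_congr rfl fun m hm => ?_
  have hmn : m ≤ n := Nat.lt_succ_iff.1 (mem_range.1 hm)
  rw [coeff_mk, coeff_mk, smul_mul_smul_comm, ← Nat.cast_smul_eq_nsmul ℚ, smul_smul]
  congr 1
  have := n.factorial_pos
  have := m.factorial_pos
  have := (n - m).factorial_pos
  have := Nat.choose_pos hmn
  rw [← Nat.choose_mul_factorial_mul_factorial hmn]
  push_cast
  field_simp

end ExponentialGeneratingFunctions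

open PowerSeries in
theorem PowerSeries.mul_eq_one_of_derivative_eq {R : Type*} [CommRing R] [IsAddTorsionFree R]
    {f g h : R⟦X⟧} (hf : d⁄dX R f = h * f) (hg : d⁄dX R g = -h * g)
    (h₀ : constantCoeff f * constantCoeff g = 1) : f * g = 1 :=
  derivative.ext
    (by rw [Derivation.leibniz, hf, hg, derivative_one, smul_eq_mul, smul_eq_mul]; ring)
    (by rw [map_mul, h₀, map_one])

section AltSeries

open PowerSeries

variable {R : Type*} [CommRing R] [Algebra ℚ R]

theorem derivative_egf_altPoly (t : R) :
    d⁄dX R (egf (altPoly t)) = egf (altPolyMaxLast t) * egf (altPoly t) := by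
  rw [derivative_egf, egf_mul]
  simp_rw [altPoly_succ]

theorem egf_altPoly_mul_egf_altPoly_neg (t : R) : egf (altPoly t) * egf (altPoly (-t)) = 1 := by
  have := IsAddTorsionFree.of_module_rat R
  refine mul_eq_one_of_derivative_eq (derivative_egf_altPoly t) ?_ ?_
  · rw [derivative_egf_altPoly]
    have : altPolyMaxLast (-t) = fun n => -altPolyMaxLast t n := funext (altPolyMaxLast_neg t)
    rw [this, egf_neg]
  · simp [constantCoeff_egf, altPoly_zero]

end AltSeries

theorem aCount_eq_card_filter_words (n k : ℕ) :
    aCount n k = #{l ∈ words (range n) | Alternating.altLen true l = k} := by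
  classical
  rw [aCount, Nat.card_eq_fintype_card, Fintype.card_subtype, card_filter, card_filter,
    ← sum_perm_eq_sum_words]
  simp_rw [Alternating.asLen_eq_altLen]

theorem coeff_altPoly_smul_X (c : ℚ) (n : ℕ) (x : Fin 1 →₀ ℕ) :
    MvPowerSeries.coeff x (altPoly (c • MvPowerSeries.X 0) n) = c ^ x 0 * aCount n (x 0) := by
  have hx (k : ℕ) : x = Finsupp.single 0 k ↔ k = x 0 := by
    rw [Finsupp.ext_iff, Fin.forall_fin_one, Finsupp.single_eq_same, eq_comm]
  simp only [altPoly, map_sum, smul_pow, MvPowerSeries.coeff_smul, MvPowerSeries.coeff_X_pow, hx]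
  rw [aCount_eq_card_filter_words, card_filter, Nat.cast_sum, mul_sum]
  refine sum_congr rfl fun l _ => ?_
  split_ifs with h
  · rw [h]; simp
  · simp

/-- `A(x, c t)`, in the variables `x = X 0` and `t = X 1`. -/
noncomputable def altSeries (c : ℚ) : MvPowerSeries (Fin 2) ℚ :=
  fun d => c ^ d 1 * aCount (d 0) (d 1) / (d 0).factorial

theorem finSuccEquiv_altSeries (c : ℚ) :
    MvPowerSeries.finSuccEquiv ℚ 1 (altSeries c) = egf (altPoly (c • MvPowerSeries.X 0)) := by
  ext n x
  rw [MvPowerSeries.coeff_coeff_finSuccEquiv, egf, PowerSeries.coeff_mk, MvPowerSeries.coeff_smul,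
    coeff_altPoly_smul_X, MvPowerSeries.coeff_apply, altSeries, Finsupp.cons_zero,
    show (1 : Fin 2) = Fin.succ 0 from rfl, Finsupp.cons_succ]
  ring

theorem Ae_add_Ao : Ae + Ao = altSeries 1 := by
  ext d
  rw [map_add, MvPowerSeries.coeff_apply, MvPowerSeries.coeff_apply, MvPowerSeries.coeff_apply]
  rcases Nat.mod_two_eq_zero_or_one (d 1) with h | h <;> simp [Ae, Ao, altSeries, h]

theorem Ae_sub_Ao : Ae - Ao = altSeries (-1) := by
  ext d
  rw [map_sub, MvPowerSeries.coeff_apply, MvPowerSeries.coeff_apply, MvPowerSeries.coeff_apply]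
  rcases Nat.even_or_odd (d 1) with h | h
  · simp [Ae, Ao, altSeries, Nat.even_iff.1 h, h.neg_one_pow]
  · simp [Ae, Ao, altSeries, Nat.odd_iff.1 h, h.neg_one_pow, neg_div]

theorem Ae_sq_sub_Ao_sq : Ae ^ 2 - Ao ^ 2 = 1 := by
  apply (MvPowerSeries.finSuccEquiv ℚ 1).injective
  rw [show Ae ^ 2 - Ao ^ 2 = (Ae + Ao) * (Ae - Ao) by ring, map_mul, Ae_add_Ao, Ae_sub_Ao,
    finSuccEquiv_altSeries, finSuccEquiv_altSeries, map_one, neg_smul, one_smul,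
    egf_altPoly_mul_egf_altPoly_neg]
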